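/- arXiv:1404.6819 — 5 statements merged into one kernel-verified Lean document; each statement's English description precedes it below -/
import Mathlib

section
/- Let S be a finite set, let B be an S×S real matrix with non-negative entries, let x ∈ ℝ^S be a vector with x_s > 0 for every s ∈ S, and let λ ≥ 0 be a real number such that (Bx)_s ≤ λ x_s for all s ∈ S. Then λ ≥ ρ(B). -/
/-!
Let `B v = μ v` with `v ≠ 0` and pick `s` maximising `|v_t| / x_t`, so that `|v| ≤ c x`
entrywise with equality at `s`. Non-negativity of `B` then gives
`|μ| |v_s| ≤ (B |v|)_s ≤ c (B x)_s ≤ λ c x_s = λ |v_s|`, hence `|μ| ≤ λ` for every eigenvalue.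
-/

noncomputable def specRad {S : Type*} [Fintype S] [DecidableEq S] (B : Matrix S S ℝ) : ℝ :=
  (spectralRadius ℂ (B.map Complex.ofReal)).toReal

def matPow {S : Type*} [Fintype S] [DecidableEq S] {k : ℕ}
    (A : Fin k → Matrix S S ℝ) (n : Fin k → ℕ) : Matrix S S ℝ :=
  ((List.finRange k).map fun i => A i ^ n i).prod

def IsIrreducibleFamily {S : Type*} [Fintype S] [DecidableEq S] {k : ℕ}
    (A : Fin k → Matrix S S ℝ) : Prop :=
  (∀ i, A i ≠ 0) ∧
    ∃ F : Finset (Fin k → ℕ), ∀ v w : S, 0 < (∑ n ∈ F, matPow A n) v w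

open Matrix Module End

theorem Matrix.exists_mulVec_eq_smul_of_mem_spectrum {K n : Type*} [Field K] [Fintype n]
    [DecidableEq n] {A : Matrix n n K} {μ : K} (hμ : μ ∈ spectrum K A) :
    ∃ v ≠ 0, A *ᵥ v = μ • v := by
  rw [← spectrum_toLin', ← hasEigenvalue_iff_mem_spectrum] at hμ
  obtain ⟨v, hv⟩ := hμ.exists_hasEigenvector
  exact ⟨v, hv.2, by simpa using hv.apply_eq_smul⟩

theorem spectralRadius_le_ofReal_of_forall_norm_le {𝕜 A : Type*} [NormedField 𝕜] [Ring A]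
    [Algebra 𝕜 A] {a : A} {r : ℝ} (h : ∀ μ ∈ spectrum 𝕜 a, ‖μ‖ ≤ r) :
    spectralRadius 𝕜 a ≤ ENNReal.ofReal r :=
  iSup₂_le fun μ hμ => by
    rw [← ENNReal.ofReal_coe_nnreal, coe_nnnorm]
    exact ENNReal.ofReal_le_ofReal (h μ hμ)

theorem Matrix.norm_map_ofReal_mulVec_le {𝕜 S : Type*} [RCLike 𝕜] [Fintype S]
    {B : Matrix S S ℝ} (hB : ∀ s t, 0 ≤ B s t) (v : S → 𝕜) (s : S) :
    ‖(B.map (↑) *ᵥ v) s‖ ≤ (B *ᵥ fun t => ‖v t‖) s := by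
  calc ‖(B.map (↑) *ᵥ v) s‖ ≤ ∑ t, ‖(B s t : 𝕜) * v t‖ := norm_sum_le _ _
    _ = (B *ᵥ fun t => ‖v t‖) s := by
      simp only [norm_mul, RCLike.norm_ofReal, abs_of_nonneg (hB s _), mulVec, dotProduct]

theorem exists_forall_norm_le_mul {S E : Type*} [Fintype S] [Nonempty S] [Norm E]
    (v : S → E) {x : S → ℝ} (hx : ∀ s, 0 < x s) :
    ∃ s, ∀ t, ‖v t‖ ≤ ‖v s‖ / x s * x t := by
  obtain ⟨s, -, hs⟩ :=
    Finset.exists_max_image Finset.univ (fun t => ‖v t‖ / x t) Finset.univ_nonempty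
  exact ⟨s, fun t => (div_le_iff₀ (hx t)).1 (hs t (Finset.mem_univ t))⟩

theorem Matrix.mulVec_mono_of_nonneg {S : Type*} [Fintype S] {B : Matrix S S ℝ}
    (hB : ∀ s t, 0 ≤ B s t) {v w : S → ℝ} (h : v ≤ w) : B *ᵥ v ≤ B *ᵥ w := fun s =>
  Finset.sum_le_sum fun t _ => mul_le_mul_of_nonneg_left (h t) (hB s t)

theorem Matrix.norm_le_of_map_ofReal_mulVec_eq_smul {𝕜 S : Type*} [RCLike 𝕜] [Fintype S]
    {B : Matrix S S ℝ} (hB : ∀ s t, 0 ≤ B s t) {x : S → ℝ} (hx : ∀ s, 0 < x s) {lam : ℝ}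
    (h : B *ᵥ x ≤ lam • x) {μ : 𝕜} {v : S → 𝕜} (hv : v ≠ 0) (hμ : B.map (↑) *ᵥ v = μ • v) :
    ‖μ‖ ≤ lam := by
  obtain ⟨t₀, ht₀⟩ := Function.ne_iff.1 hv
  have : Nonempty S := ⟨t₀⟩
  obtain ⟨s, hs⟩ := exists_forall_norm_le_mul v hx
  set c := ‖v s‖ / x s
  have hc : 0 < c := pos_of_mul_pos_left ((norm_pos_iff.2 ht₀).trans_le (hs t₀)) (hx t₀).le
  have hvs : 0 < ‖v s‖ := (div_pos_iff_of_pos_right (hx s)).1 hc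
  refine le_of_mul_le_mul_right ?_ hvs
  calc ‖μ‖ * ‖v s‖ = ‖(B.map (↑) *ᵥ v) s‖ := by simp [hμ]
    _ ≤ (B *ᵥ fun t => ‖v t‖) s := norm_map_ofReal_mulVec_le hB v s
    _ ≤ (B *ᵥ (c • x)) s := mulVec_mono_of_nonneg hB hs s
    _ = c * (B *ᵥ x) s := by rw [mulVec_smul]; rfl
    _ ≤ c * (lam * x s) := mul_le_mul_of_nonneg_left (h s) hc.le
    _ = lam * (c * x s) := by ring
    _ = lam * ‖v s‖ := by rw [div_mul_cancel₀ _ (hx s).ne']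

/-- If `B` is a non-negative real `S × S` matrix, `x` is an entrywise positive vector and
`λ ≥ 0` satisfies `(Bx)_s ≤ λ x_s` for all `s`, then `λ ≥ ρ(B)`. -/
theorem subinvariance_spectral_radius {S : Type*} [Fintype S] [DecidableEq S]
    (B : Matrix S S ℝ) (hB : ∀ s t, 0 ≤ B s t)
    (x : S → ℝ) (hx : ∀ s, 0 < x s)
    (lam : ℝ) (hlam : 0 ≤ lam)
    (h : ∀ s, B.mulVec x s ≤ lam * x s) :
    specRad B ≤ lam := by
  refine ENNReal.toReal_le_of_le_ofReal hlam (spectralRadius_le_ofReal_of_forall_norm_le ?_)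
  intro μ hμ
  obtain ⟨v, hv, hμv⟩ := exists_mulVec_eq_smul_of_mem_spectrum hμ
  exact norm_le_of_map_ofReal_mulVec_eq_smul hB hx h hv hμv
end

section
/- Suppose {A_1,…,A_k} is an irreducible family of pairwise commuting matrices in M_S([0,∞)) for a finite set S, and let x be the unique non-negative common eigenvector of the A_i with Σ_{s∈S} x_s = 1. If z ∈ ℂ^S satisfies A_i z = ρ(A_i) z for all 1 ≤ i ≤ k (regarding A_i as a complex matrix), then z ∈ ℂ x, i.e. z is a complex scalar multiple of x. -/
section

open Matrix

variable {S : Type*} [Fintype S]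

theorem Matrix.mem_spectrum_iff_exists_mulVec_eq_smul {K : Type*} [Field K] [DecidableEq S]
    (N : Matrix S S K) (β : K) : β ∈ spectrum K N ↔ ∃ u ≠ 0, N *ᵥ u = β • u := by
  rw [← Matrix.spectrum_toLin', ← Module.End.hasEigenvalue_iff_mem_spectrum]
  constructor
  · intro h
    obtain ⟨u, hu⟩ := h.exists_hasEigenvector
    exact ⟨u, hu.2, by simpa using hu.apply_eq_smul⟩
  · rintro ⟨u, hu, hNu⟩
    exact Module.End.hasEigenvalue_of_hasEigenvector
      ⟨by simpa [Module.End.mem_eigenspace_iff] using hNu, hu⟩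

theorem norm_le_of_mulVec_eq_smul_of_pos {M : Matrix S S ℝ} (hM : ∀ s t, 0 ≤ M s t)
    {x : S → ℝ} (hx : ∀ s, 0 < x s) {lam : ℝ} (hMx : M *ᵥ x = lam • x)
    {β : ℂ} {u : S → ℂ} (hu : u ≠ 0) (hMu : M.map Complex.ofReal *ᵥ u = β • u) : ‖β‖ ≤ lam := by
  obtain ⟨s₁, hs₁⟩ := Function.ne_iff.mp hu
  obtain ⟨s₀, -, hs₀⟩ :=
    Finset.univ.exists_max_image (fun s => ‖u s‖ / x s) ⟨s₁, Finset.mem_univ _⟩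
  set c := ‖u s₀‖ / x s₀
  have hle : ∀ t, ‖u t‖ ≤ c * x t := fun t =>
    (div_le_iff₀ (hx t)).mp (hs₀ t (Finset.mem_univ t))
  have hc : 0 < c :=
    (div_pos (norm_pos_iff.mpr hs₁) (hx s₁)).trans_le (hs₀ s₁ (Finset.mem_univ _))
  have hus₀ : ‖u s₀‖ = c * x s₀ := (div_mul_cancel₀ _ (hx s₀).ne').symm
  have hrow_u := congrFun hMu s₀
  have hrow_x := congrFun hMx s₀
  simp only [mulVec, dotProduct, map_apply, Pi.smul_apply, smul_eq_mul] at hrow_u hrow_x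
  have key : ‖β‖ * ‖u s₀‖ ≤ lam * ‖u s₀‖ :=
    calc ‖β‖ * ‖u s₀‖ = ‖∑ t, (M s₀ t : ℂ) * u t‖ := by rw [hrow_u, norm_mul]
    _ ≤ ∑ t, M s₀ t * ‖u t‖ := by
        refine (norm_sum_le _ _).trans_eq (Finset.sum_congr rfl fun t _ => ?_)
        rw [norm_mul, Complex.norm_real, Real.norm_of_nonneg (hM s₀ t)]
    _ ≤ ∑ t, M s₀ t * (c * x t) :=
        Finset.sum_le_sum fun t _ => mul_le_mul_of_nonneg_left (hle t) (hM s₀ t)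
    _ = lam * ‖u s₀‖ := by
        rw [hus₀, ← mul_assoc, mul_comm lam c, mul_assoc, ← hrow_x, Finset.mul_sum]
        exact Finset.sum_congr rfl fun t _ => by ring
  exact le_of_mul_le_mul_right key (hus₀ ▸ mul_pos hc (hx s₀))

theorem specRad_eq_of_mulVec_eq_smul_of_pos [DecidableEq S] [Nonempty S] {M : Matrix S S ℝ}
    (hM : ∀ s t, 0 ≤ M s t) {x : S → ℝ} (hx : ∀ s, 0 < x s) {lam : ℝ}
    (hMx : M *ᵥ x = lam • x) : specRad M = lam := by
  set xc : S → ℂ := fun s => (x s : ℂ)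
  have hxc : xc ≠ 0 := by
    obtain ⟨s⟩ := ‹Nonempty S›
    exact Function.ne_iff.mpr ⟨s, by simpa [xc] using (hx s).ne'⟩
  have hMxc : M.map Complex.ofReal *ᵥ xc = (lam : ℂ) • xc := by
    funext s
    have hs := congrArg Complex.ofReal (congrFun hMx s)
    simp only [mulVec, dotProduct, Pi.smul_apply, smul_eq_mul] at hs ⊢
    push_cast at hs
    simpa [xc] using hs
  have hlam : 0 ≤ lam := (norm_nonneg _).trans
    (norm_le_of_mulVec_eq_smul_of_pos hM hx hMx hxc hMxc)
  have hmem : (lam : ℂ) ∈ spectrum ℂ (M.map Complex.ofReal) :=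
    (mem_spectrum_iff_exists_mulVec_eq_smul _ _).mpr ⟨xc, hxc, hMxc⟩
  have hrad : spectralRadius ℂ (M.map Complex.ofReal) = ENNReal.ofReal lam := by
    refine le_antisymm (iSup₂_le fun β hβ => ?_) (le_iSup₂_of_le (lam : ℂ) hmem ?_)
    · obtain ⟨u, hu, hMu⟩ := (mem_spectrum_iff_exists_mulVec_eq_smul _ _).mp hβ
      rw [← enorm_eq_nnnorm, ← ofReal_norm]
      exact ENNReal.ofReal_le_ofReal (norm_le_of_mulVec_eq_smul_of_pos hM hx hMx hu hMu)
    · rw [← enorm_eq_nnnorm, ← ofReal_norm, Complex.norm_real, Real.norm_of_nonneg hlam]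
  rw [specRad, hrad, ENNReal.toReal_ofReal hlam]

theorem matPow_mulVec_of_mulVec_eq_smul [DecidableEq S] {k : ℕ} {A : Fin k → Matrix S S ℝ}
    {lam : Fin k → ℝ} {y : S → ℝ} (h : ∀ i, A i *ᵥ y = lam i • y) (n : Fin k → ℕ) :
    matPow A n *ᵥ y = (∏ i, lam i ^ n i) • y := by
  have hpow : ∀ i m, (A i ^ m) *ᵥ y = lam i ^ m • y := by
    intro i m
    induction m with
    | zero => simp
    | succ m ih => rw [pow_succ, ← mulVec_mulVec, h, mulVec_smul, ih, smul_smul, ← pow_succ']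
  rw [matPow, Fin.prod_univ_def]
  induction List.finRange k with
  | nil => simp
  | cons i L ih =>
    rw [List.map_cons, List.map_cons, List.prod_cons, List.prod_cons, ← mulVec_mulVec, ih,
      mulVec_smul, hpow, smul_smul, mul_comm]

theorem sum_matPow_mulVec_of_mulVec_eq_smul [DecidableEq S] {k : ℕ}
    {A : Fin k → Matrix S S ℝ} {lam : Fin k → ℝ} {y : S → ℝ} (h : ∀ i, A i *ᵥ y = lam i • y)
    (F : Finset (Fin k → ℕ)) :
    (∑ n ∈ F, matPow A n) *ᵥ y = (∑ n ∈ F, ∏ i, lam i ^ n i) • y := by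
  rw [sum_mulVec, Finset.sum_smul]
  exact Finset.sum_congr rfl fun n _ => matPow_mulVec_of_mulVec_eq_smul h n

theorem pos_of_mulVec_eq_smul {K : Type*} [Semiring K] [PartialOrder K] [IsStrictOrderedRing K]
    {B : Matrix S S K} (hB : ∀ s t, 0 < B s t) {x : S → K}
    (hx₀ : ∀ s, 0 ≤ x s) (hx : x ≠ 0) {μ : K} (hBx : B *ᵥ x = μ • x) (s : S) : 0 < x s := by
  obtain ⟨t, ht⟩ := Function.ne_iff.mp hx
  have hBxs : 0 < (B *ᵥ x) s := Finset.sum_pos' (fun u _ => mul_nonneg (hB s u).le (hx₀ u))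
    ⟨t, Finset.mem_univ t, mul_pos (hB s t) ((hx₀ t).lt_of_ne' ht)⟩
  rw [hBx, Pi.smul_apply, smul_eq_mul] at hBxs
  exact (hx₀ s).lt_of_ne' (right_ne_zero_of_mul hBxs.ne')

/-- Subtracting from `y` the largest multiple of `x` lying below it leaves a non-negative
eigenvector with a zero entry, which positivity of `B` forces to vanish. -/
theorem exists_eq_smul_of_mulVec_eq_smul {K : Type*} [Field K] [LinearOrder K]
    [IsStrictOrderedRing K] {B : Matrix S S K} (hB : ∀ s t, 0 < B s t)
    {x : S → K} (hx : ∀ s, 0 < x s) {μ : K} (hBx : B *ᵥ x = μ • x) {y : S → K}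
    (hBy : B *ᵥ y = μ • y) : ∃ c : K, y = c • x := by
  cases isEmpty_or_nonempty S
  · exact ⟨0, funext isEmptyElim⟩
  obtain ⟨s₀, -, hs₀⟩ := Finset.univ.exists_min_image (fun s => y s / x s) Finset.univ_nonempty
  set c := y s₀ / x s₀
  set w := y - c • x
  have hw₀ : ∀ t, 0 ≤ w t := fun t => by
    have := (le_div_iff₀ (hx t)).mp (hs₀ t (Finset.mem_univ t))
    simp only [w, Pi.sub_apply, Pi.smul_apply, smul_eq_mul]
    linarith
  have hws₀ : w s₀ = 0 := by
    simp only [w, Pi.sub_apply, Pi.smul_apply, smul_eq_mul, c, div_mul_cancel₀ _ (hx s₀).ne',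
      sub_self]
  have hBw : B *ᵥ w = μ • w := by
    rw [mulVec_sub, mulVec_smul, hBy, hBx, smul_sub, smul_comm]
  have hrow : ∑ t, B s₀ t * w t = 0 := by
    simpa [hws₀, mulVec, dotProduct] using congrFun hBw s₀
  have hw : w = 0 := funext fun t => by
    have := (Finset.sum_eq_zero_iff_of_nonneg fun u _ => mul_nonneg (hB s₀ u).le (hw₀ u)).mp
      hrow t (Finset.mem_univ t)
    simpa [(hB s₀ t).ne'] using this
  exact ⟨c, sub_eq_zero.mp hw⟩

theorem mulVec_comp_eq_smul_of_map_ofReal {M : Matrix S S ℝ} {z : S → ℂ} {r : ℝ}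
    (h : M.map Complex.ofReal *ᵥ z = (r : ℂ) • z) (f : ℂ →ₗ[ℝ] ℝ) :
    M *ᵥ (f ∘ z) = r • (f ∘ z) := by
  funext s
  have hs := congrArg f (congrFun h s)
  simp only [mulVec, dotProduct, map_apply, Pi.smul_apply, smul_eq_mul, ← Complex.real_smul,
    map_sum, map_smul] at hs
  simpa only [mulVec, dotProduct, Pi.smul_apply, Function.comp_apply, smul_eq_mul] using hs

end

theorem common_eigenspace_one_dimensional_general {S : Type*} [Fintype S] [DecidableEq S] {k : ℕ}
    (A : Fin k → Matrix S S ℝ)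
    (hnn : ∀ i v w, 0 ≤ A i v w)
    (hirr : IsIrreducibleFamily A)
    (x : S → ℝ)
    (hx : (∀ s, 0 ≤ x s) ∧ (∑ s, x s = 1) ∧
      ∀ i, ∃ lam : ℝ, (A i).mulVec x = lam • x)
    (z : S → ℂ)
    (hz : ∀ i, ((A i).map Complex.ofReal).mulVec z = (specRad (A i) : ℂ) • z) :
    ∃ c : ℂ, z = c • fun s => (x s : ℂ) := by
  obtain ⟨hx₀, hx₁, hAx⟩ := hx
  choose lam hlam using hAx
  obtain ⟨-, F, hF⟩ := hirr
  have hBx := sum_matPow_mulVec_of_mulVec_eq_smul hlam F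
  have hxne : x ≠ 0 := by rintro rfl; simp at hx₁
  have hxpos := pos_of_mulVec_eq_smul hF hx₀ hxne hBx
  have : Nonempty S := (Function.ne_iff.mp hxne).nonempty
  have hρ i : specRad (A i) = lam i := specRad_eq_of_mulVec_eq_smul_of_pos (hnn i) hxpos (hlam i)
  have hreal (f : ℂ →ₗ[ℝ] ℝ) : ∃ c : ℝ, f ∘ z = c • x :=
    exists_eq_smul_of_mulVec_eq_smul hF hxpos hBx <| sum_matPow_mulVec_of_mulVec_eq_smul
      (fun i => mulVec_comp_eq_smul_of_map_ofReal (hρ i ▸ hz i) f) F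
  obtain ⟨a, ha⟩ := hreal Complex.reLm
  obtain ⟨b, hb⟩ := hreal Complex.imLm
  refine ⟨⟨a, b⟩, funext fun s => Complex.ext ?_ ?_⟩
  · simpa using congrFun ha s
  · simpa using congrFun hb s

/-- Any complex vector `z` with `A_i z = ρ(A_i) z` for all `i` is a complex scalar multiple
of the unimodular Perron–Frobenius eigenvector `x`. -/
theorem common_eigenspace_one_dimensional {S : Type*} [Fintype S] [DecidableEq S] {k : ℕ}
    (A : Fin k → Matrix S S ℝ)
    (hnn : ∀ i v w, 0 ≤ A i v w)
    (hcomm : ∀ i j, A i * A j = A j * A i)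
    (hirr : IsIrreducibleFamily A)
    (x : S → ℝ)
    (hx : (∀ s, 0 ≤ x s) ∧ (∑ s, x s = 1) ∧
      ∀ i, ∃ lam : ℝ, (A i).mulVec x = lam • x)
    (z : S → ℂ)
    (hz : ∀ i, ((A i).map Complex.ofReal).mulVec z = (specRad (A i) : ℂ) • z) :
    ∃ c : ℂ, z = c • fun s => (x s : ℂ) :=
  common_eigenspace_one_dimensional_general A hnn hirr x hx z hz
end

section
/- Suppose {A_1,…,A_k} is an irreducible family of pairwise commuting matrices in M_S([0,∞)) for a finite set S. Suppose y ∈ [0,∞)^S is non-zero and λ ∈ [0,∞)^k satisfies (A_i y)_s ≤ λ_i y_s for all 1 ≤ i ≤ k and all s ∈ S. Then y_s > 0 for every s ∈ S, and λ_i ≥ ρ(A_i) for all 1 ≤ i ≤ k. -/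
/-!
Nonnegative matrices `M` with `M y ≤ c y` for some `c ≥ 0` form a semiring containing every
`A i`, hence also the entrywise positive matrix `B = ∑ n ∈ F, A^n`. From `B y ≤ C y` and
`(B y)_s ≥ B s t * y t > 0` for a coordinate `t` with `y t > 0`, every `y s` is positive.

If `μ` is an eigenvalue of `A i` with eigenvector `v`, then `|μ| |v| ≤ A i |v|` entrywise.
At a coordinate `s` where `|v s| / y s` is maximal, `|v| ≤ (|v s| / y s) y` and
`A i y ≤ λ_i y` give `|μ| |v s| ≤ λ_i |v s|`, so `|μ| ≤ λ_i` (Collatz–Wielandt).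
-/

namespace Matrix

variable {S : Type*} [Fintype S]

lemma exists_mulVec_eq_smul_of_mem_spectrum_s4 [DecidableEq S] {K : Type*} [Field K]
    {M : Matrix S S K} {μ : K} (hμ : μ ∈ spectrum K M) : ∃ v ≠ 0, M *ᵥ v = μ • v := by
  rw [← spectrum_toLin', ← Module.End.hasEigenvalue_iff_mem_spectrum] at hμ
  obtain ⟨v, hv, hv0⟩ := hμ.exists_hasEigenvector
  exact ⟨v, hv0, by simpa using Module.End.mem_eigenspace_iff.mp hv⟩

lemma mulVec_nonneg {M : Matrix S S ℝ} (hM : ∀ i j, 0 ≤ M i j) {v : S → ℝ} (hv : 0 ≤ v) :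
    0 ≤ M *ᵥ v :=
  fun i => Finset.sum_nonneg fun j _ => mul_nonneg (hM i j) (hv j)

lemma mulVec_mono {M : Matrix S S ℝ} (hM : ∀ i j, 0 ≤ M i j) {u v : S → ℝ} (h : u ≤ v) :
    M *ᵥ u ≤ M *ᵥ v := by
  rw [← sub_nonneg, ← mulVec_sub]
  exact mulVec_nonneg hM (sub_nonneg.mpr h)

lemma norm_map_ofReal_mulVec_le_s4 {M : Matrix S S ℝ} (hM : ∀ i j, 0 ≤ M i j) (v : S → ℂ) (s : S) :
    ‖(M.map Complex.ofReal *ᵥ v) s‖ ≤ (M *ᵥ fun t => ‖v t‖) s := by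
  refine (norm_sum_le _ _).trans_eq (Finset.sum_congr rfl fun t _ => ?_)
  simp only [map_apply, norm_mul, Complex.norm_real, Real.norm_of_nonneg (hM s t)]

def subinvariantSubsemiring [DecidableEq S] (y : S → ℝ) :
    Subsemiring (Matrix S S ℝ) where
  carrier := {M | (∀ i j, 0 ≤ M i j) ∧ ∃ c : ℝ, 0 ≤ c ∧ M *ᵥ y ≤ c • y}
  zero_mem' := ⟨fun _ _ => le_rfl, 0, le_rfl, by simp⟩
  one_mem' := ⟨fun i j => by by_cases h : i = j <;> simp [one_apply, h], 1, zero_le_one, by simp⟩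
  add_mem' := by
    rintro M N ⟨hM, a, ha, hMy⟩ ⟨hN, b, hb, hNy⟩
    refine ⟨fun i j => add_nonneg (hM i j) (hN i j), a + b, add_nonneg ha hb, ?_⟩
    rw [add_mulVec, add_smul]
    exact add_le_add hMy hNy
  mul_mem' := by
    rintro M N ⟨hM, a, ha, hMy⟩ ⟨hN, b, hb, hNy⟩
    refine ⟨fun i j => Finset.sum_nonneg fun t _ => mul_nonneg (hM i t) (hN t j), b * a,
      mul_nonneg hb ha, ?_⟩
    calc (M * N) *ᵥ y = M *ᵥ (N *ᵥ y) := (mulVec_mulVec _ _ _).symm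
      _ ≤ M *ᵥ (b • y) := mulVec_mono hM hNy
      _ = b • M *ᵥ y := mulVec_smul _ _ _
      _ ≤ b • a • y := smul_le_smul_of_nonneg_left hMy hb
      _ = (b * a) • y := smul_smul _ _ _

lemma mem_subinvariantSubsemiring [DecidableEq S] {y : S → ℝ} {M : Matrix S S ℝ} :
    M ∈ subinvariantSubsemiring y ↔ (∀ i j, 0 ≤ M i j) ∧ ∃ c : ℝ, 0 ≤ c ∧ M *ᵥ y ≤ c • y :=
  Iff.rfl

lemma pos_of_mulVec_le_smul {B : Matrix S S ℝ} (hB : ∀ i j, 0 < B i j) {y : S → ℝ}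
    (hy0 : 0 ≤ y) (hy : y ≠ 0) {c : ℝ} (hBy : B *ᵥ y ≤ c • y) (s : S) : 0 < y s := by
  obtain ⟨t, ht⟩ : ∃ t, 0 < y t := by
    by_contra! h
    exact hy (le_antisymm h hy0)
  have : 0 < c * y s :=
    calc 0 < B s t * y t := mul_pos (hB s t) ht
      _ ≤ (B *ᵥ y) s :=
        Finset.single_le_sum (fun u _ => mul_nonneg (hB s u).le (hy0 u)) (Finset.mem_univ t)
      _ ≤ c * y s := hBy s
  exact (hy0 s).lt_of_ne fun h => by simp [← h] at this

lemma le_of_smul_le_mulVec_of_mulVec_le_smul {A : Matrix S S ℝ} (hA : ∀ i j, 0 ≤ A i j)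
    {y z : S → ℝ} (hy : ∀ s, 0 < y s) (hz0 : 0 ≤ z) (hz : z ≠ 0) {r l : ℝ}
    (hrz : r • z ≤ A *ᵥ z) (hly : A *ᵥ y ≤ l • y) : r ≤ l := by
  obtain ⟨t, ht⟩ : ∃ t, z t ≠ 0 := Function.ne_iff.mp hz
  obtain ⟨s, -, hs⟩ :=
    Finset.exists_max_image Finset.univ (fun s => z s / y s) ⟨t, Finset.mem_univ t⟩
  set m := z s / y s
  have hzm : z ≤ m • y := fun u => (div_le_iff₀ (hy u)).mp (hs u (Finset.mem_univ u))
  have hzs : z s = m * y s := (div_mul_cancel₀ _ (hy s).ne').symm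
  have hm : 0 < m := (div_pos ((hz0 t).lt_of_ne' ht) (hy t)).trans_le (hs t (Finset.mem_univ t))
  have hzs_pos : 0 < z s := hzs ▸ mul_pos hm (hy s)
  refine le_of_mul_le_mul_right ?_ hzs_pos
  calc r * z s ≤ (A *ᵥ z) s := hrz s
    _ ≤ (A *ᵥ (m • y)) s := mulVec_mono hA hzm s
    _ = m * (A *ᵥ y) s := by rw [mulVec_smul]; rfl
    _ ≤ m * (l * y s) := mul_le_mul_of_nonneg_left (hly s) hm.le
    _ = l * z s := by rw [hzs]; ring

lemma norm_le_of_mem_spectrum_map_ofReal [DecidableEq S] {A : Matrix S S ℝ}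
    (hA : ∀ i j, 0 ≤ A i j) {y : S → ℝ} (hy : ∀ s, 0 < y s) {l : ℝ} (hly : A *ᵥ y ≤ l • y)
    {μ : ℂ} (hμ : μ ∈ spectrum ℂ (A.map Complex.ofReal)) : ‖μ‖ ≤ l := by
  obtain ⟨v, hv0, hv⟩ := exists_mulVec_eq_smul_of_mem_spectrum_s4 hμ
  refine le_of_smul_le_mulVec_of_mulVec_le_smul hA hy (fun s => norm_nonneg (v s)) ?_ ?_ hly
  · exact fun h => hv0 (funext fun s => norm_eq_zero.mp (congrFun h s))
  · intro s
    simpa [hv, norm_mul] using norm_map_ofReal_mulVec_le_s4 hA v s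

end Matrix

open Matrix

section

variable {S : Type*} [Fintype S] [DecidableEq S]

lemma matPow_mem {k : ℕ} {A : Fin k → Matrix S S ℝ} {R : Subsemiring (Matrix S S ℝ)}
    (hA : ∀ i, A i ∈ R) (n : Fin k → ℕ) : matPow A n ∈ R :=
  R.list_prod_mem <| by simpa using fun i => pow_mem (hA i) (n i)

lemma specRad_le_of_mulVec_le_smul {A : Matrix S S ℝ} (hA : ∀ i j, 0 ≤ A i j) {y : S → ℝ}
    (hy : ∀ s, 0 < y s) {l : ℝ} (hl : 0 ≤ l) (hly : A *ᵥ y ≤ l • y) : specRad A ≤ l := by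
  refine ENNReal.toReal_le_of_le_ofReal hl (iSup₂_le fun μ hμ => ?_)
  rw [← enorm_eq_nnnorm, ← ofReal_norm]
  exact ENNReal.ofReal_le_ofReal (norm_le_of_mem_spectrum_map_ofReal hA hy hly hμ)

end

theorem subinvariance_family_general {S : Type*} [Fintype S] [DecidableEq S] {k : ℕ}
    (A : Fin k → Matrix S S ℝ)
    (hnn : ∀ i v w, 0 ≤ A i v w)
    (hirr : IsIrreducibleFamily A)
    (y : S → ℝ) (hy0 : ∀ s, 0 ≤ y s) (hy : y ≠ 0)
    (lam : Fin k → ℝ) (hlam : ∀ i, 0 ≤ lam i)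
    (h : ∀ i s, (A i).mulVec y s ≤ lam i * y s) :
    (∀ s, 0 < y s) ∧ ∀ i, specRad (A i) ≤ lam i := by
  obtain ⟨-, F, hF⟩ := hirr
  have hA : ∀ i, A i ∈ subinvariantSubsemiring y := fun i =>
    mem_subinvariantSubsemiring.mpr ⟨hnn i, lam i, hlam i, h i⟩
  obtain ⟨-, C, -, hC⟩ :=
    mem_subinvariantSubsemiring.mp (sum_mem fun n (_ : n ∈ F) => matPow_mem hA n)
  have hpos := pos_of_mulVec_le_smul hF hy0 hy hC
  exact ⟨hpos, fun i => specRad_le_of_mulVec_le_smul (hnn i) hpos (hlam i) (h i)⟩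

/-- Subinvariance for irreducible families: if `y ≥ 0` is non-zero and
`A_i y ≤ λ_i y` entrywise, then `y > 0` and `λ_i ≥ ρ(A_i)` for all `i`. -/
theorem subinvariance_family {S : Type*} [Fintype S] [DecidableEq S] {k : ℕ}
    (A : Fin k → Matrix S S ℝ)
    (hnn : ∀ i v w, 0 ≤ A i v w)
    (hcomm : ∀ i j, A i * A j = A j * A i)
    (hirr : IsIrreducibleFamily A)
    (y : S → ℝ) (hy0 : ∀ s, 0 ≤ y s) (hy : y ≠ 0)
    (lam : Fin k → ℝ) (hlam : ∀ i, 0 ≤ lam i)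
    (h : ∀ i s, (A i).mulVec y s ≤ lam i * y s) :
    (∀ s, 0 < y s) ∧ ∀ i, specRad (A i) ≤ lam i :=
  subinvariance_family_general A hnn hirr y hy0 hy lam hlam h
end

section
/- Let Λ be a finite k-graph with coordinate matrices A_1,…,A_k, where A_i(v,w) = |vΛ^{e_i}w|. Then the A_i are nonzero and pairwise commuting, and Λ is strongly connected if and only if {A_1,…,A_k} is an irreducible family of matrices (i.e. there is a finite subset F ⊆ ℕ^k such that Σ_{n∈F} Π_{i=1}^k A_i^{n_i} has all entries strictly positive). -/
/-- A higher-rank graph (`k`-graph): a countable category with a degree functor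
`d : Λ → ℕ^k` satisfying the unique factorisation property.  Morphisms are called
paths; the vertices are the paths of degree `0` (the identity morphisms).
`r` and `s` are the codomain (range) and domain (source) maps.  By convention
`Λ^{e_i} ≠ ∅` for each standard generator `e_i` of `ℕ^k`. -/
structure KGraph (k : ℕ) where
  Path : Type
  countable : Countable Path
  d : Path → Fin k → ℕ
  r : Path → Path
  s : Path → Path
  d_r : ∀ lam, d (r lam) = 0
  d_s : ∀ lam, d (s lam) = 0
  r_vertex : ∀ v, d v = 0 → r v = v
  s_vertex : ∀ v, d v = 0 → s v = v
  comp : ∀ μ ν : Path, s μ = r ν → Path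
  r_comp : ∀ μ ν h, r (comp μ ν h) = r μ
  s_comp : ∀ μ ν h, s (comp μ ν h) = s ν
  d_comp : ∀ μ ν h, d (comp μ ν h) = d μ + d ν
  id_comp : ∀ lam (h : s (r lam) = r lam), comp (r lam) lam h = lam
  comp_id : ∀ lam (h : s lam = r (s lam)), comp lam (s lam) h = lam
  assoc : ∀ μ ν τ (h1 : s μ = r ν) (h2 : s ν = r τ)
      (h3 : s (comp μ ν h1) = r τ) (h4 : s μ = r (comp ν τ h2)),
      comp (comp μ ν h1) τ h3 = comp μ (comp ν τ h2) h4
  factor : ∀ (lam : Path) (m n : Fin k → ℕ), d lam = m + n →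
      ∃! μν : Path × Path, ∃ h : s μν.1 = r μν.2,
        d μν.1 = m ∧ d μν.2 = n ∧ comp μν.1 μν.2 h = lam
  edge_nonempty : ∀ i : Fin k, ∃ lam, d lam = Pi.single i 1

namespace KGraph

variable {k : ℕ}

/-- The vertices of a `k`-graph: the paths of degree `0`. -/
abbrev Vertex (Λ : KGraph k) : Type := {v : Λ.Path // Λ.d v = 0}

/-- A `k`-graph is finite if `Λ^n` is finite for every `n ∈ ℕ^k`. -/
def IsFinite (Λ : KGraph k) : Prop := ∀ n : Fin k → ℕ, {lam : Λ.Path | Λ.d lam = n}.Finite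

/-- A `k`-graph is strongly connected if `vΛw ≠ ∅` for all vertices `v, w`. -/
def StronglyConnected (Λ : KGraph k) : Prop :=
  ∀ v w : Λ.Path, Λ.d v = 0 → Λ.d w = 0 → ∃ lam : Λ.Path, Λ.r lam = v ∧ Λ.s lam = w

/-- `Λ^min(μ,ν) = {(α,β) : μα = νβ, d(μα) = d(μ) ∨ d(ν)}`. -/
def minSet (Λ : KGraph k) (μ ν : Λ.Path) : Set (Λ.Path × Λ.Path) :=
  {p | ∃ (h1 : Λ.s μ = Λ.r p.1) (h2 : Λ.s ν = Λ.r p.2),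
      Λ.comp μ p.1 h1 = Λ.comp ν p.2 h2 ∧ Λ.d μ + Λ.d p.1 = Λ.d μ ⊔ Λ.d ν}

end KGraph

/-- An infinite path in a `k`-graph `Λ`: a degree-preserving functor `x : Ω_k → Λ`,
recorded by its values `x(m,n)` for `m ≤ n` in `ℕ^k`. -/
structure InfinitePath {k : ℕ} (Λ : KGraph k) where
  toFun : ∀ m n : Fin k → ℕ, m ≤ n → Λ.Path
  d_eq : ∀ m n h, Λ.d (toFun m n h) = n - m
  src : ∀ m n h, Λ.s (toFun m n h) = toFun n n le_rfl
  rng : ∀ m n h, Λ.r (toFun m n h) = toFun m m le_rfl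
  comp_eq : ∀ m n p (h1 : m ≤ n) (h2 : n ≤ p)
      (hc : Λ.s (toFun m n h1) = Λ.r (toFun n p h2)),
      Λ.comp (toFun m n h1) (toFun n p h2) hc = toFun m p (h1.trans h2)

namespace InfinitePath

variable {k : ℕ} {Λ : KGraph k}

/-- The shift map `σ^n` on the infinite-path space, `σ^n(x)(p,q) = x(n+p, n+q)`. -/
def shift (x : InfinitePath Λ) (n : Fin k → ℕ) : InfinitePath Λ where
  toFun p q h := x.toFun (n + p) (n + q) (add_le_add le_rfl h)
  d_eq p q h := by
    rw [x.d_eq]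
    funext i
    exact Nat.add_sub_add_left (n i) (q i) (p i)
  src p q h := x.src _ _ _
  rng p q h := x.rng _ _ _
  comp_eq p q t h1 h2 hc := x.comp_eq _ _ _ _ _ hc

/-- The range `r(x) = x(0,0)` of an infinite path. -/
def range (x : InfinitePath Λ) : Λ.Path := x.toFun 0 0 le_rfl

end InfinitePath

/-- `ExtEq Λ lam y x` says that `y = lam · x`, i.e. `y(0, d(lam)) = lam` and
`σ^{d(lam)}(y) = x`.  (Such an extension is unique when it exists.) -/
def KGraph.ExtEq {k : ℕ} (Λ : KGraph k) (lam : Λ.Path) (y x : InfinitePath Λ) : Prop :=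
  y.toFun 0 (Λ.d lam) zero_le = lam ∧ y.shift (Λ.d lam) = x

/-- `Λ.IsTheta m n μ ν` says that `μ ∈ Λ^m`, `ν ∈ Λ^n`, and `μx = νx` for every
infinite path `x ∈ Z(s(μ))`; i.e. `ν = θ_{m,n}(μ)`. -/
def KGraph.IsTheta {k : ℕ} (Λ : KGraph k) (m n : Fin k → ℕ) (μ ν : Λ.Path) : Prop :=
  Λ.d μ = m ∧ Λ.d ν = n ∧
    ∀ x : InfinitePath Λ, x.range = Λ.s μ →
      ∃ y : InfinitePath Λ, Λ.ExtEq μ y x ∧ Λ.ExtEq ν y x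

/-- The periodicity group `Per Λ = {m − n : σ^m(x) = σ^n(x) for all x ∈ Λ^∞} ⊆ ℤ^k`. -/
def KGraph.Per {k : ℕ} (Λ : KGraph k) : Set (Fin k → ℤ) :=
  {g | ∃ m n : Fin k → ℕ, (∀ i, (m i : ℤ) - n i = g i) ∧
      ∀ x : InfinitePath Λ, x.shift m = x.shift n}

/-- `Λ` is aperiodic if every vertex `v` admits `x ∈ Z(v)` with
`σ^m(x) ≠ σ^n(x)` for all `m ≠ n` in `ℕ^k`. -/
def KGraph.Aperiodic {k : ℕ} (Λ : KGraph k) : Prop :=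
  ∀ v : Λ.Path, Λ.d v = 0 → ∃ x : InfinitePath Λ, x.range = v ∧
    ∀ m n : Fin k → ℕ, m ≠ n → x.shift m ≠ x.shift n

/-- The `i`-th coordinate matrix of a `k`-graph: `A_i(v,w) = |vΛ^{e_i}w|`. -/
noncomputable def coordMatrix {k : ℕ} (Λ : KGraph k) (i : Fin k) :
    Matrix Λ.Vertex Λ.Vertex ℝ :=
  Matrix.of fun v w =>
    (({lam : Λ.Path | Λ.d lam = Pi.single i 1 ∧ Λ.r lam = v.1 ∧ Λ.s lam = w.1}).ncard : ℝ)

/-! Write `M(n)` for the matrix `(|vΛ^n w|)_{v,w}`. Unique factorisation identifies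
`vΛ^(m+n) w` with the disjoint union over vertices `u` of `vΛ^m u × uΛ^n w`, so
`M(m + n) = M(m) M(n)` and `M(0) = 1`: `M` is a monoid homomorphism on `ℕ^k`. Hence the
coordinate matrices `A_i = M(e_i)` commute and `∏ᵢ A_i^{n_i} = M(n)`. An entry of
`∑_{n ∈ F} M(n)` is positive iff some `vΛ^n w` with `n ∈ F` is nonempty, and as there are
finitely many vertices, one finite `F` serves all pairs iff `Λ` is strongly connected. -/

theorem matPow_eq_of_monoidHom {S : Type*} [Fintype S] [DecidableEq S] {k : ℕ}
    (P : Multiplicative (Fin k → ℕ) →* Matrix S S ℝ) (n : Fin k → ℕ) :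
    matPow (fun i => P (.ofAdd (Pi.single i 1))) n = P (.ofAdd n) := by
  have hn : ∏ i, Multiplicative.ofAdd (Pi.single i 1 : Fin k → ℕ) ^ n i = .ofAdd n := by
    simp only [← ofAdd_nsmul, ← ofAdd_sum, ← Pi.single_smul, smul_eq_mul, mul_one,
      Finset.univ_sum_single]
  rw [← hn, Fin.prod_univ_def, map_list_prod, List.map_map]
  simp only [matPow, Function.comp_def, map_pow]

namespace KGraph

variable {k : ℕ} (Λ : KGraph k)

theorem eq_and_eq_of_comp_eq_comp {μ ν μ' ν' : Λ.Path} (h : Λ.s μ = Λ.r ν)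
    (h' : Λ.s μ' = Λ.r ν') (hμ : Λ.d μ = Λ.d μ') (hν : Λ.d ν = Λ.d ν')
    (heq : Λ.comp μ ν h = Λ.comp μ' ν' h') : μ = μ' ∧ ν = ν' := by
  obtain ⟨_, -, huniq⟩ := Λ.factor (Λ.comp μ ν h) (Λ.d μ) (Λ.d ν) (Λ.d_comp μ ν h)
  have h₁ := huniq (μ, ν) ⟨h, rfl, rfl, rfl⟩
  have h₂ := huniq (μ', ν') ⟨h', hμ.symm, hν.symm, heq.symm⟩
  exact Prod.ext_iff.mp (h₁.trans h₂.symm)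

/-- `vΛ^n w`. -/
def pathSet (v w : Λ.Vertex) (n : Fin k → ℕ) : Set Λ.Path :=
  {lam | Λ.d lam = n ∧ Λ.r lam = v.1 ∧ Λ.s lam = w.1}

theorem IsFinite.pathSet_finite {Λ : KGraph k} (hfin : Λ.IsFinite) (v w : Λ.Vertex)
    (n : Fin k → ℕ) : (Λ.pathSet v w n).Finite :=
  (hfin n).subset fun _ h => h.1

theorem pathSet_zero_self (v : Λ.Vertex) : Λ.pathSet v v 0 = {v.1} := by
  ext lam
  constructor
  · rintro ⟨hd, hr, -⟩
    rw [← hr, Λ.r_vertex lam hd]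
    rfl
  · rintro rfl
    exact ⟨v.2, Λ.r_vertex v.1 v.2, Λ.s_vertex v.1 v.2⟩

theorem pathSet_zero_of_ne {v w : Λ.Vertex} (hvw : v ≠ w) : Λ.pathSet v w 0 = ∅ := by
  refine Set.eq_empty_of_forall_notMem fun lam ⟨hd, hr, hs⟩ => hvw (Subtype.ext ?_)
  rw [← hr, ← hs, Λ.r_vertex lam hd, Λ.s_vertex lam hd]

def compPathSet (v w : Λ.Vertex) (m n : Fin k → ℕ) :
    (Σ u : Λ.Vertex, Λ.pathSet v u m × Λ.pathSet u w n) → Λ.pathSet v w (m + n)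
  | ⟨_, μ, ν⟩ => ⟨Λ.comp μ ν (μ.2.2.2.trans ν.2.2.1.symm), by
      refine ⟨?_, ?_, ?_⟩
      · rw [Λ.d_comp, μ.2.1, ν.2.1]
      · rw [Λ.r_comp, μ.2.2.1]
      · rw [Λ.s_comp, ν.2.2.2]⟩

theorem compPathSet_bijective (v w : Λ.Vertex) (m n : Fin k → ℕ) :
    Function.Bijective (Λ.compPathSet v w m n) := by
  constructor
  · rintro ⟨u, ⟨μ, hμ⟩, ⟨ν, hν⟩⟩ ⟨u', ⟨μ', hμ'⟩, ⟨ν', hν'⟩⟩ heq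
    obtain ⟨rfl, rfl⟩ := Λ.eq_and_eq_of_comp_eq_comp _ _ (hμ.1.trans hμ'.1.symm)
      (hν.1.trans hν'.1.symm) (congrArg Subtype.val heq)
    obtain rfl : u = u' := Subtype.ext (hμ.2.2.symm.trans hμ'.2.2)
    rfl
  · rintro ⟨lam, hd, hr, hs⟩
    obtain ⟨⟨μ, ν⟩, ⟨h, hμ, hν, rfl⟩, -⟩ := Λ.factor lam m n hd
    exact ⟨⟨⟨Λ.s μ, Λ.d_s μ⟩, ⟨μ, hμ, by rwa [Λ.r_comp] at hr, rfl⟩,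
      ⟨ν, hν, h.symm, by rwa [Λ.s_comp] at hs⟩⟩, rfl⟩

theorem ncard_pathSet_add [Fintype Λ.Vertex] (hfin : Λ.IsFinite) (v w : Λ.Vertex)
    (m n : Fin k → ℕ) :
    (Λ.pathSet v w (m + n)).ncard =
      ∑ u, (Λ.pathSet v u m).ncard * (Λ.pathSet u w n).ncard := by
  have := fun u => (hfin.pathSet_finite v u m).to_subtype
  have := fun u => (hfin.pathSet_finite u w n).to_subtype
  simp only [← Nat.card_coe_set_eq, ← Nat.card_prod]
  rw [← Nat.card_eq_of_bijective _ (Λ.compPathSet_bijective v w m n), Nat.card_sigma]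

noncomputable def pathMatrix (n : Fin k → ℕ) : Matrix Λ.Vertex Λ.Vertex ℝ :=
  Matrix.of fun v w => ((Λ.pathSet v w n).ncard : ℝ)

theorem coordMatrix_eq_pathMatrix (i : Fin k) :
    coordMatrix Λ i = Λ.pathMatrix (Pi.single i 1) := rfl

theorem pathMatrix_zero [DecidableEq Λ.Vertex] : Λ.pathMatrix 0 = 1 := by
  ext v w
  rcases eq_or_ne v w with rfl | hvw
  · simp [pathMatrix, pathSet_zero_self]
  · simp [pathMatrix, pathSet_zero_of_ne _ hvw, hvw]

theorem pathMatrix_add [Fintype Λ.Vertex] (hfin : Λ.IsFinite) (m n : Fin k → ℕ) :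
    Λ.pathMatrix (m + n) = Λ.pathMatrix m * Λ.pathMatrix n := by
  ext v w
  simp [pathMatrix, Matrix.mul_apply, Λ.ncard_pathSet_add hfin]

noncomputable def pathMatrixHom [Fintype Λ.Vertex] [DecidableEq Λ.Vertex] (hfin : Λ.IsFinite) :
    Multiplicative (Fin k → ℕ) →* Matrix Λ.Vertex Λ.Vertex ℝ where
  toFun n := Λ.pathMatrix n.toAdd
  map_one' := Λ.pathMatrix_zero
  map_mul' m n := Λ.pathMatrix_add hfin m.toAdd n.toAdd

theorem matPow_coordMatrix [Fintype Λ.Vertex] [DecidableEq Λ.Vertex] (hfin : Λ.IsFinite)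
    (n : Fin k → ℕ) : matPow (coordMatrix Λ) n = Λ.pathMatrix n :=
  matPow_eq_of_monoidHom (Λ.pathMatrixHom hfin) n

theorem pathMatrix_apply_pos_iff (hfin : Λ.IsFinite) {v w : Λ.Vertex} {n : Fin k → ℕ} :
    0 < Λ.pathMatrix n v w ↔ (Λ.pathSet v w n).Nonempty := by
  rw [pathMatrix, Matrix.of_apply, Nat.cast_pos, Set.ncard_pos (hfin.pathSet_finite v w n)]

theorem coordMatrix_ne_zero (hfin : Λ.IsFinite) (i : Fin k) : coordMatrix Λ i ≠ 0 := by
  obtain ⟨lam, hlam⟩ := Λ.edge_nonempty i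
  have hpos : 0 < coordMatrix Λ i ⟨Λ.r lam, Λ.d_r lam⟩ ⟨Λ.s lam, Λ.d_s lam⟩ :=
    (Λ.pathMatrix_apply_pos_iff hfin).2 ⟨lam, hlam, rfl, rfl⟩
  rintro h
  rw [h] at hpos
  exact hpos.false

theorem coordMatrix_mul_comm [Fintype Λ.Vertex] (hfin : Λ.IsFinite) (i j : Fin k) :
    coordMatrix Λ i * coordMatrix Λ j = coordMatrix Λ j * coordMatrix Λ i := by
  simp only [coordMatrix_eq_pathMatrix, ← Λ.pathMatrix_add hfin, add_comm]

theorem stronglyConnected_iff_forall_pathSet_nonempty :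
    Λ.StronglyConnected ↔ ∀ v w : Λ.Vertex, ∃ n, (Λ.pathSet v w n).Nonempty := by
  constructor
  · intro h v w
    obtain ⟨lam, hr, hs⟩ := h v w v.2 w.2
    exact ⟨Λ.d lam, lam, rfl, hr, hs⟩
  · rintro h v w hv hw
    obtain ⟨n, lam, -, hr, hs⟩ := h ⟨v, hv⟩ ⟨w, hw⟩
    exact ⟨lam, hr, hs⟩

theorem isIrreducibleFamily_coordMatrix_iff [Fintype Λ.Vertex] [DecidableEq Λ.Vertex]
    (hfin : Λ.IsFinite) :
    IsIrreducibleFamily (coordMatrix Λ) ↔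
      ∀ v w : Λ.Vertex, ∃ n, (Λ.pathSet v w n).Nonempty := by
  have hsum_pos (F : Finset (Fin k → ℕ)) (v w : Λ.Vertex) :
      0 < (∑ n ∈ F, Λ.pathMatrix n) v w ↔ ∃ n ∈ F, (Λ.pathSet v w n).Nonempty := by
    simp only [Matrix.sum_apply, ← Λ.pathMatrix_apply_pos_iff hfin]
    exact Finset.sum_pos_iff_of_nonneg fun n _ => Nat.cast_nonneg _
  simp only [IsIrreducibleFamily, Λ.matPow_coordMatrix hfin, hsum_pos,
    and_iff_right (Λ.coordMatrix_ne_zero hfin)]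
  constructor
  · rintro ⟨F, hF⟩ v w
    obtain ⟨n, -, hn⟩ := hF v w
    exact ⟨n, hn⟩
  · intro h
    choose n hn using h
    exact ⟨Finset.univ.image fun p : Λ.Vertex × Λ.Vertex => n p.1 p.2,
      fun v w => ⟨n v w, Finset.mem_image_of_mem _ (Finset.mem_univ (v, w)), hn v w⟩⟩

end KGraph

/-- The coordinate matrices of a finite `k`-graph are nonzero and pairwise commuting,
and `Λ` is strongly connected iff they form an irreducible family. -/
theorem stronglyConnected_iff_irreducible_family {k : ℕ} (Λ : KGraph k)
    (hfin : Λ.IsFinite) [Fintype Λ.Vertex] [DecidableEq Λ.Vertex] :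
    (∀ i, coordMatrix Λ i ≠ 0) ∧
    (∀ i j, coordMatrix Λ i * coordMatrix Λ j = coordMatrix Λ j * coordMatrix Λ i) ∧
    (Λ.StronglyConnected ↔ IsIrreducibleFamily (coordMatrix Λ)) :=
  ⟨Λ.coordMatrix_ne_zero hfin, Λ.coordMatrix_mul_comm hfin,
    Λ.stronglyConnected_iff_forall_pathSet_nonempty.trans
      (Λ.isIrreducibleFamily_coordMatrix_iff hfin).symm⟩
end

section
/- Let Λ be a strongly connected finite k-graph, and suppose v ∈ Λ^0 and m, n ∈ ℕ^k satisfy σ^m(x) = σ^n(x) for all x ∈ Z(v). Then σ^m(x) = σ^n(x) for all x ∈ Λ^∞. -/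
/-!
Strong connectivity gives a path `λ ∈ vΛr(x)`. The infinite path `λx` lies in `Z(v)`, so
`σ^m(λx) = σ^n(λx)`; applying `σ^{d(λ)}`, which commutes with `σ^m` and `σ^n` and strips off
`λ`, gives `σ^m(x) = σ^n(x)`. The real work is the construction of `λx`: its segment between
degrees `p ≤ q` is cut out of the finite path `λ · x(0, q)` by unique factorisation.
-/

namespace KGraph

variable {k : ℕ} {Λ : KGraph k}

def CompEq (Λ : KGraph k) (μ ν z : Λ.Path) : Prop :=
  ∃ h : Λ.s μ = Λ.r ν, Λ.comp μ ν h = z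

namespace CompEq

variable {μ ν z : Λ.Path}

lemma comp_eq (h : Λ.CompEq μ ν z) (hc : Λ.s μ = Λ.r ν) : Λ.comp μ ν hc = z :=
  h.choose_spec

lemma d_eq (h : Λ.CompEq μ ν z) : Λ.d z = Λ.d μ + Λ.d ν := by
  obtain ⟨hc, rfl⟩ := h
  exact Λ.d_comp μ ν hc

lemma r_eq (h : Λ.CompEq μ ν z) : Λ.r z = Λ.r μ := by
  obtain ⟨hc, rfl⟩ := h
  exact Λ.r_comp μ ν hc

lemma s_eq (h : Λ.CompEq μ ν z) : Λ.s z = Λ.s ν := by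
  obtain ⟨hc, rfl⟩ := h
  exact Λ.s_comp μ ν hc

lemma assoc {τ a b : Λ.Path} (hμν : Λ.CompEq μ ν a) (hντ : Λ.CompEq ν τ b) :
    Λ.CompEq a τ z ↔ Λ.CompEq μ b z := by
  obtain ⟨h₁, rfl⟩ := hμν
  obtain ⟨h₂, rfl⟩ := hντ
  constructor
  · rintro ⟨h₃, rfl⟩
    exact ⟨h₁.trans (Λ.r_comp ν τ h₂).symm, (Λ.assoc μ ν τ h₁ h₂ h₃ _).symm⟩
  · rintro ⟨h₄, rfl⟩
    exact ⟨(Λ.s_comp μ ν h₁).trans h₂, Λ.assoc μ ν τ h₁ h₂ _ h₄⟩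

lemma unique {μ' ν' : Λ.Path} (h : Λ.CompEq μ ν z) (h' : Λ.CompEq μ' ν' z)
    (hd : Λ.d μ = Λ.d μ') : μ = μ' ∧ ν = ν' := by
  have hν : Λ.d ν' = Λ.d ν := add_left_cancel (h'.d_eq.symm.trans (h.d_eq.trans (by rw [hd])))
  obtain ⟨hc, hcomp⟩ := h
  obtain ⟨hc', hcomp'⟩ := h'
  have := (Λ.factor z (Λ.d μ) (Λ.d ν) (hcomp ▸ Λ.d_comp μ ν hc)).unique
    (y₁ := (μ, ν)) (y₂ := (μ', ν')) ⟨hc, rfl, rfl, hcomp⟩ ⟨hc', hd.symm, hν, hcomp'⟩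
  exact Prod.ext_iff.mp this

end CompEq

lemma exists_compEq {μ ν : Λ.Path} (hc : Λ.s μ = Λ.r ν) : ∃ z, Λ.CompEq μ ν z :=
  ⟨_, hc, rfl⟩

lemma compEq_r_left (z : Λ.Path) : Λ.CompEq (Λ.r z) z z :=
  ⟨Λ.s_vertex _ (Λ.d_r z), Λ.id_comp z _⟩

lemma compEq_s_right (z : Λ.Path) : Λ.CompEq z (Λ.s z) z :=
  ⟨(Λ.r_vertex _ (Λ.d_s z)).symm, Λ.comp_id z _⟩

lemma exists_compEq_of_le {z : Λ.Path} {a : Fin k → ℕ} (h : a ≤ Λ.d z) :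
    ∃ μ ν, Λ.d μ = a ∧ Λ.CompEq μ ν z := by
  obtain ⟨⟨μ, ν⟩, ⟨hc, hμ, -, hcomp⟩, -⟩ :=
    Λ.factor z a (Λ.d z - a) (add_tsub_cancel_of_le h).symm
  exact ⟨μ, ν, hμ, hc, hcomp⟩

def IsSegment (Λ : KGraph k) (z : Λ.Path) (a : Fin k → ℕ) (ν : Λ.Path) : Prop :=
  ∃ μ ν' τ, Λ.d μ = a ∧ Λ.CompEq μ ν' z ∧ Λ.CompEq ν τ ν'

section IsSegment

variable {z α β ν : Λ.Path} {a b : Fin k → ℕ}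

lemma CompEq.isSegment_left (h : Λ.CompEq α β z) : Λ.IsSegment z 0 α :=
  ⟨Λ.r z, z, β, Λ.d_r z, compEq_r_left z, h⟩

lemma CompEq.isSegment_right (h : Λ.CompEq α β z) : Λ.IsSegment z (Λ.d α) β :=
  ⟨α, β, Λ.s β, rfl, h, compEq_s_right β⟩

lemma IsSegment.trans {ρ : Λ.Path} (hν : Λ.IsSegment z a ν) (hρ : Λ.IsSegment ν b ρ) :
    Λ.IsSegment z (a + b) ρ := by
  obtain ⟨μ, ν', τ, rfl, hμν', hντ⟩ := hν
  obtain ⟨μ₂, ν₂', τ₂, rfl, hμν₂', hρτ₂⟩ := hρ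
  obtain ⟨c, hc⟩ := exists_compEq (hρτ₂.s_eq.symm.trans (hμν₂'.s_eq.symm.trans hντ.choose))
  obtain ⟨e, he⟩ := exists_compEq (hρτ₂.s_eq.trans hc.choose)
  obtain ⟨m, hm⟩ := exists_compEq (hμν'.choose.trans (hντ.r_eq.trans hμν₂'.r_eq))
  exact ⟨m, e, c, hm.d_eq, (hm.assoc ((hμν₂'.assoc he).mp hντ)).mpr hμν', (hρτ₂.assoc hc).mp he⟩

lemma IsSegment.unique {ν₂ : Λ.Path} (h : Λ.IsSegment z a ν) (h₂ : Λ.IsSegment z a ν₂)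
    (hd : Λ.d ν = Λ.d ν₂) : ν = ν₂ := by
  obtain ⟨μ, ν', τ, hμ, hμν', hντ⟩ := h
  obtain ⟨μ₂, ν₂', τ₂, hμ₂, hμν₂', hντ₂⟩ := h₂
  obtain ⟨-, rfl⟩ := hμν'.unique hμν₂' (hμ.trans hμ₂.symm)
  exact (hντ.unique hντ₂ hd).1

lemma exists_isSegment (hab : a ≤ b) (hb : b ≤ Λ.d z) :
    ∃ ν, Λ.IsSegment z a ν ∧ Λ.d ν = b - a := by
  obtain ⟨μ, ν', hμ, hμν'⟩ := exists_compEq_of_le (hab.trans hb)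
  have hν' : b - a ≤ Λ.d ν' := by
    rw [hμν'.d_eq, hμ] at hb
    exact tsub_le_iff_left.mpr hb
  obtain ⟨ν, τ, hν, hντ⟩ := exists_compEq_of_le hν'
  exact ⟨ν, ⟨μ, ν', τ, hμ, hμν', hντ⟩, hν⟩

end IsSegment

open Classical in
/-- The segment `z(a, b)`; junk (`z` itself) unless `a ≤ b ≤ d z`. -/
noncomputable def seg (Λ : KGraph k) (z : Λ.Path) (a b : Fin k → ℕ) : Λ.Path :=
  if h : ∃ ν, Λ.IsSegment z a ν ∧ Λ.d ν = b - a then h.choose else z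

section seg

variable {z ν : Λ.Path} {a b c : Fin k → ℕ}

lemma seg_spec (hab : a ≤ b) (hb : b ≤ Λ.d z) :
    Λ.IsSegment z a (Λ.seg z a b) ∧ Λ.d (Λ.seg z a b) = b - a := by
  have h := exists_isSegment hab hb
  rw [seg, dif_pos h]
  exact h.choose_spec

lemma IsSegment.seg_eq (h : Λ.IsSegment z a ν) (hd : Λ.d ν = b - a) : Λ.seg z a b = ν := by
  have he : ∃ ν, Λ.IsSegment z a ν ∧ Λ.d ν = b - a := ⟨ν, h, hd⟩
  rw [seg, dif_pos he]
  exact he.choose_spec.1.unique h (he.choose_spec.2.trans hd.symm)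

lemma seg_zero_zero (z : Λ.Path) : Λ.seg z 0 0 = Λ.r z :=
  (compEq_r_left z).isSegment_left.seg_eq (by rw [Λ.d_r, tsub_self])

lemma r_seg (hab : a ≤ b) (hb : b ≤ Λ.d z) : Λ.r (Λ.seg z a b) = Λ.seg z a a := by
  have h := (seg_spec hab hb).1.trans (compEq_r_left _).isSegment_left
  rw [add_zero] at h
  exact (h.seg_eq (by rw [Λ.d_r, tsub_self])).symm

lemma s_seg (hab : a ≤ b) (hb : b ≤ Λ.d z) : Λ.s (Λ.seg z a b) = Λ.seg z b b := by
  obtain ⟨hν, hd⟩ := seg_spec hab hb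
  have h := hν.trans (compEq_s_right _).isSegment_right
  rw [hd, add_tsub_cancel_of_le hab] at h
  exact (h.seg_eq (by rw [Λ.d_s, tsub_self])).symm

lemma compEq_seg_seg (hab : a ≤ b) (hbc : b ≤ c) (hc : c ≤ Λ.d z) :
    Λ.CompEq (Λ.seg z a b) (Λ.seg z b c) (Λ.seg z a c) := by
  obtain ⟨hρ, hdρ⟩ := seg_spec (hab.trans hbc) hc
  obtain ⟨α, β, hα, hαβ⟩ := exists_compEq_of_le (show b - a ≤ Λ.d (Λ.seg z a c) from
    hdρ ▸ tsub_le_tsub_right hbc a)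
  have hβ : Λ.d β = c - b := by
    rw [← add_tsub_cancel_left (Λ.d α) (Λ.d β), ← hαβ.d_eq, hdρ, hα,
      tsub_tsub_tsub_cancel_right hab]
  have hsα := hρ.trans hαβ.isSegment_left
  have hsβ := hρ.trans hαβ.isSegment_right
  rw [add_zero] at hsα
  rw [hα, add_tsub_cancel_of_le hab] at hsβ
  rwa [hsα.seg_eq hα, hsβ.seg_eq hβ]

lemma IsSegment.of_compEq {w z' : Λ.Path} (h : Λ.IsSegment z a ν) (hz : Λ.CompEq z w z') :
    Λ.IsSegment z' a ν := by
  simpa only [zero_add] using hz.isSegment_left.trans h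

lemma seg_of_compEq {w z' : Λ.Path} (hz : Λ.CompEq z w z') (hab : a ≤ b) (hb : b ≤ Λ.d z) :
    Λ.seg z' a b = Λ.seg z a b :=
  ((seg_spec hab hb).1.of_compEq hz).seg_eq (seg_spec hab hb).2

end seg

end KGraph

namespace InfinitePath

variable {k : ℕ} {Λ : KGraph k}

@[ext]
lemma ext {x y : InfinitePath Λ} (h : ∀ p q hpq, x.toFun p q hpq = y.toFun p q hpq) : x = y := by
  cases x; cases y
  congr
  funext p q hpq
  exact h p q hpq

lemma toFun_congr (x : InfinitePath Λ) {p q p' q' : Fin k → ℕ} (hp : p = p') (hq : q = q')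
    (h : p ≤ q) (h' : p' ≤ q') : x.toFun p q h = x.toFun p' q' h' := by
  subst hp hq
  rfl

lemma shift_shift (x : InfinitePath Λ) (a b : Fin k → ℕ) :
    (x.shift a).shift b = x.shift (a + b) := by
  ext p q hpq
  exact x.toFun_congr (add_assoc a b p).symm (add_assoc a b q).symm _ _

lemma shift_comm (x : InfinitePath Λ) (a b : Fin k → ℕ) :
    (x.shift a).shift b = (x.shift b).shift a := by
  rw [shift_shift, shift_shift, add_comm]

lemma d_range (x : InfinitePath Λ) : Λ.d x.range = 0 := by
  rw [range, x.d_eq, tsub_self]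

lemma compEq_toFun (x : InfinitePath Λ) {p q t : Fin k → ℕ} (hpq : p ≤ q) (hqt : q ≤ t) :
    Λ.CompEq (x.toFun p q hpq) (x.toFun q t hqt) (x.toFun p t (hpq.trans hqt)) :=
  ⟨by rw [x.src, x.rng], x.comp_eq p q t hpq hqt _⟩

lemma isSegment_toFun (x : InfinitePath Λ) {p q t : Fin k → ℕ} (hpq : p ≤ q) (hqt : q ≤ t) :
    Λ.IsSegment (x.toFun 0 t zero_le) p (x.toFun p q hpq) :=
  ⟨x.toFun 0 p zero_le, x.toFun p t (hpq.trans hqt), x.toFun q t hqt,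
    by rw [x.d_eq, tsub_zero], x.compEq_toFun zero_le _, x.compEq_toFun hpq hqt⟩

section cons

variable (lam : Λ.Path) (x : InfinitePath Λ) (h : Λ.s lam = x.range)

noncomputable def consPrefix (q : Fin k → ℕ) : Λ.Path :=
  Λ.comp lam (x.toFun 0 q zero_le) (h.trans (x.rng 0 q zero_le).symm)

lemma compEq_consPrefix (q : Fin k → ℕ) :
    Λ.CompEq lam (x.toFun 0 q zero_le) (consPrefix lam x h q) :=
  ⟨_, rfl⟩

lemma le_d_consPrefix (q : Fin k → ℕ) : q ≤ Λ.d (consPrefix lam x h q) := by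
  rw [(compEq_consPrefix lam x h q).d_eq, x.d_eq, tsub_zero]
  exact le_add_self

lemma compEq_consPrefix_of_le {p q : Fin k → ℕ} (hpq : p ≤ q) :
    Λ.CompEq (consPrefix lam x h p) (x.toFun p q hpq) (consPrefix lam x h q) :=
  ((compEq_consPrefix lam x h p).assoc (x.compEq_toFun zero_le hpq)).mpr
    (compEq_consPrefix lam x h q)

noncomputable def cons : InfinitePath Λ where
  toFun p q _ := Λ.seg (consPrefix lam x h q) p q
  d_eq p q hpq := (KGraph.seg_spec hpq (le_d_consPrefix lam x h q)).2
  src p q hpq := KGraph.s_seg hpq (le_d_consPrefix lam x h q)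
  rng p q hpq := by
    rw [KGraph.r_seg hpq (le_d_consPrefix lam x h q),
      KGraph.seg_of_compEq (compEq_consPrefix_of_le lam x h hpq) le_rfl (le_d_consPrefix lam x h p)]
  comp_eq p q t hpq hqt hc := by
    have hcomp := KGraph.compEq_seg_seg hpq hqt (le_d_consPrefix lam x h t)
    rw [KGraph.seg_of_compEq (compEq_consPrefix_of_le lam x h hqt) hpq
      (le_d_consPrefix lam x h q)] at hcomp
    exact hcomp.comp_eq hc

lemma range_cons : (x.cons lam h).range = Λ.r lam := by
  change Λ.seg _ 0 0 = _
  rw [KGraph.seg_zero_zero, (compEq_consPrefix lam x h 0).r_eq]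

lemma shift_cons : (x.cons lam h).shift (Λ.d lam) = x := by
  ext p q hpq
  refine ((compEq_consPrefix lam x h _).isSegment_right.trans
    (x.isSegment_toFun hpq le_add_self)).seg_eq ?_
  rw [x.d_eq, add_tsub_add_eq_tsub_left]

end cons

end InfinitePath

theorem local_periodicity_global_general {k : ℕ} (Λ : KGraph k)
    (hsc : Λ.StronglyConnected)
    (v : Λ.Path) (hv : Λ.d v = 0) (m n : Fin k → ℕ)
    (h : ∀ x : InfinitePath Λ, x.range = v → x.shift m = x.shift n) :
    ∀ x : InfinitePath Λ, x.shift m = x.shift n := by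
  intro x
  obtain ⟨lam, hr, hs⟩ := hsc v x.range hv x.d_range
  set y := x.cons lam hs
  have hy : y.shift m = y.shift n := h y (by rw [InfinitePath.range_cons, hr])
  calc x.shift m = (y.shift (Λ.d lam)).shift m := by rw [InfinitePath.shift_cons]
    _ = (y.shift (Λ.d lam)).shift n := by rw [InfinitePath.shift_comm, hy, InfinitePath.shift_comm]
    _ = x.shift n := by rw [InfinitePath.shift_cons]

/-- If `σ^m(x) = σ^n(x)` for all `x ∈ Z(v)` for some vertex `v` of a strongly connected
finite `k`-graph, then `σ^m(x) = σ^n(x)` for every infinite path `x`. -/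
theorem local_periodicity_global {k : ℕ} (Λ : KGraph k)
    (hfin : Λ.IsFinite) (hsc : Λ.StronglyConnected)
    (v : Λ.Path) (hv : Λ.d v = 0) (m n : Fin k → ℕ)
    (h : ∀ x : InfinitePath Λ, x.range = v → x.shift m = x.shift n) :
    ∀ x : InfinitePath Λ, x.shift m = x.shift n :=
  local_periodicity_global_general Λ hsc v hv m n h
end
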